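/- (Rate Exchange Lemma) Let F be a field. Suppose rank([H11·M1 H12·M2]) = rank([H11 H12·M2]) = r, where M1 is a full-column-rank matrix with r − R2 columns and M2 is a full-column-rank matrix with R2 ≥ 1 columns. Suppose M1' = [α M1] (M1 augmented by one column α) satisfies rank(H11·M1') = r − R2 + 1. Then there exists a matrix M2' consisting of R2 − 1 of the columns of M2, with full column rank, such that span(H11·M1') ∩ span(H12·M2') = {0}. -/

import Mathlib

/-!
Counting dimensions, `span (H11·M1)` and `span (H12·M2)` are complementary subspaces of
`span [H11 H12·M2]`, and `H12·M2` is injective. Hence `H11 α = u + H12·M2 c` with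
`u ∈ span (H11·M1)`, and `c ≠ 0` because adjoining `α` raises the rank. Delete a column `k`
of `M2` with `c k ≠ 0`. If `a • H11 α + u' = H12·M2 d` with `u' ∈ span (H11·M1)` and `d k = 0`,
then complementarity and injectivity give `d = a • c`, so `a = 0` and then `u' = 0`.
-/

open Function Matrix Module Submodule

namespace Submodule

variable {K V : Type*} [DivisionRing K] [AddCommGroup V] [Module K V]

theorem disjoint_and_finrank_right_eq_of_finrank_sup_eq_add {A B : Submodule K V}
    [FiniteDimensional K A] [FiniteDimensional K B] {p q : ℕ}
    (hA : finrank K A ≤ p) (hB : finrank K B ≤ q) (h : finrank K ↥(A ⊔ B) = p + q) :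
    Disjoint A B ∧ finrank K B = q := by
  have := finrank_sup_add_finrank_inf_eq A B
  exact ⟨disjoint_iff.2 (finrank_eq_zero.1 (by omega)), by omega⟩

theorem disjoint_span_add_sup_map {Y : Type*} [AddCommGroup Y] [Module K Y] {T : Y →ₗ[K] V}
    (hT : Injective T) {A : Submodule K V} (hA : Disjoint A (LinearMap.range T)) {u : V}
    (hu : u ∈ A) {S : Submodule K Y} {c : Y} (hc : c ∉ S) :
    Disjoint (span K {u + T c} ⊔ A) (S.map T) := by
  rw [disjoint_def]
  rintro x hx ⟨d, hdS, rfl⟩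
  obtain ⟨_, ha, u₁, hu₁, hx⟩ := mem_sup.1 hx
  obtain ⟨a, rfl⟩ := mem_span_singleton.1 ha
  have hdiff : T (d - a • c) = 0 := by
    refine disjoint_def.1 hA _ ?_ ⟨_, rfl⟩
    rw [map_sub, map_smul, ← hx, smul_add]
    convert A.add_mem (A.smul_mem a hu) hu₁ using 1
    abel
  have hd : d = a • c := sub_eq_zero.1 (hT (hdiff.trans (map_zero T).symm))
  have ha : a = 0 := by
    by_contra ha
    exact hc ((S.smul_mem_iff ha).1 (hd ▸ hdS))
  simp [hd, ha]

end Submodule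

namespace Matrix

variable {R : Type*} [CommSemiring R] {m n p : Type*} [Fintype n] [Fintype p]

theorem range_mulVecLin_fromCols (A : Matrix m n R) (B : Matrix m p R) :
    LinearMap.range (fromCols A B).mulVecLin
      = LinearMap.range A.mulVecLin ⊔ LinearMap.range B.mulVecLin := by
  have : (fromCols A B).col = Sum.elim A.col B.col := by
    ext (i | i) <;> rfl
  simp only [range_mulVecLin, this, Set.Sum.elim_range, span_union]

theorem range_mulVecLin_replicateCol {ι : Type*} [Fintype ι] [Nonempty ι] (v : m → R) :
    LinearMap.range (replicateCol ι v).mulVecLin = span R {v} := by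
  rw [range_mulVecLin]
  exact congrArg (span R) (Set.range_const (ι := ι) (c := v))

theorem range_mulVecLin_submatrix_le_map_ker_proj [DecidableEq n] (N : Matrix m n R)
    {f : p → n} {k : n} (hfk : ∀ i, f i ≠ k) :
    LinearMap.range (N.submatrix id f).mulVecLin
      ≤ (LinearMap.ker (LinearMap.proj k : (n → R) →ₗ[R] R)).map N.mulVecLin := by
  rw [range_mulVecLin, span_le]
  rintro _ ⟨i, rfl⟩
  exact ⟨Pi.single (f i) 1, by simp [hfk i], mulVec_single_one N (f i)⟩

variable {K : Type*} [Field K]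

theorem linearIndependent_col_iff_rank_eq {M : Matrix m n K} :
    LinearIndependent K M.col ↔ M.rank = Fintype.card n := by
  rw [rank_eq_finrank_span_cols, linearIndependent_iff_card_eq_finrank_span, eq_comm, Set.finrank]

theorem rank_submatrix_of_rank_eq_card {M : Matrix m n K} (hM : M.rank = Fintype.card n)
    {f : p → n} (hf : Injective f) : (M.submatrix id f).rank = Fintype.card p := by
  rw [← linearIndependent_col_iff_rank_eq] at hM ⊢
  exact hM.comp f hf

end Matrix

theorem Fin.exists_injective_ne {n : ℕ} (k : Fin n) :
    ∃ f : Fin (n - 1) → Fin n, Injective f ∧ ∀ i, f i ≠ k := by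
  obtain _ | n := n
  · exact k.elim0
  · exact ⟨k.succAbove, succAbove_right_injective, succAbove_ne k⟩

theorem stmt_7_general {F : Type*} [Field F] {m n1 n2 r R2 : ℕ}
    (H11 : Matrix (Fin m) (Fin n1) F) (H12 : Matrix (Fin m) (Fin n2) F)
    (M1 : Matrix (Fin n1) (Fin (r - R2)) F) (M2 : Matrix (Fin n2) (Fin R2) F)
    (hR2r : R2 ≤ r)
    (hM2 : M2.rank = R2)
    (hr1 : (Matrix.fromCols (H11 * M1) (H12 * M2)).rank = r)
    (hr2 : (Matrix.fromCols H11 (H12 * M2)).rank = r)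
    (α : Fin n1 → F)
    (hM1' : (H11 * Matrix.fromCols (Matrix.of fun i (_ : Fin 1) => α i) M1).rank
        = r - R2 + 1) :
    ∃ f : Fin (R2 - 1) → Fin R2, Function.Injective f ∧
      (M2.submatrix id f).rank = R2 - 1 ∧
      LinearMap.range
          (H11 * Matrix.fromCols (Matrix.of fun i (_ : Fin 1) => α i) M1).mulVecLin ⊓
        LinearMap.range (H12 * M2.submatrix id f).mulVecLin = ⊥ := by
  set A := LinearMap.range (H11 * M1).mulVecLin
  set B := LinearMap.range (H12 * M2).mulVecLin
  have hA : finrank F A ≤ r - R2 := rank_le_width _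
  obtain ⟨hAB, hB⟩ : Disjoint A B ∧ finrank F B = R2 :=
    disjoint_and_finrank_right_eq_of_finrank_sup_eq_add hA (rank_le_width _)
      (by rw [← range_mulVecLin_fromCols, ← rank, hr1]; omega)
  have hT : Injective (H12 * M2).mulVecLin := by
    rw [coe_mulVecLin, mulVec_injective_iff, linearIndependent_col_iff_rank_eq]
    simpa [rank] using hB
  have hsup : LinearMap.range H11.mulVecLin ⊔ B = A ⊔ B := by
    refine (eq_of_le_of_finrank_le (sup_le_sup_right ?_ B) ?_).symm
    · rintro _ ⟨v, rfl⟩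
      exact ⟨M1 *ᵥ v, by simp [mulVec_mulVec]⟩
    · rw [← range_mulVecLin_fromCols, ← range_mulVecLin_fromCols, ← rank, ← rank, hr1, hr2]
  obtain ⟨u, hu, _, ⟨c, rfl⟩, huc⟩ :=
    mem_sup.1 (hsup ▸ mem_sup_left ⟨α, rfl⟩ : H11 *ᵥ α ∈ A ⊔ B)
  have hW : LinearMap.range (H11 * fromCols (of fun i (_ : Fin 1) => α i) M1).mulVecLin
      = span F {H11 *ᵥ α} ⊔ A := by
    rw [mul_fromCols, range_mulVecLin_fromCols, ← range_mulVecLin_replicateCol (ι := Fin 1),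
      replicateCol_mulVec]
    rfl
  have hα : H11 *ᵥ α ∉ A := fun h ↦ by
    rw [rank, hW, sup_eq_right.2 (span_singleton_le_iff_mem _ _ |>.2 h)] at hM1'
    omega
  obtain ⟨k, hk⟩ : ∃ k, c k ≠ 0 := by
    by_contra! hc
    rw [show c = 0 from funext hc, map_zero, add_zero] at huc
    exact hα (huc ▸ hu)
  obtain ⟨f, hf, hfk⟩ := Fin.exists_injective_ne k
  refine ⟨f, hf, by simpa using rank_submatrix_of_rank_eq_card (by simpa using hM2) hf, ?_⟩
  rw [hW, ← huc, ← disjoint_iff, show H12 * M2.submatrix id f = (H12 * M2).submatrix id f from rfl]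
  exact (disjoint_span_add_sup_map hT hAB hu (by simpa using hk)).mono_right
    (range_mulVecLin_submatrix_le_map_ker_proj _ hfk)

/-- Rate Exchange Lemma: if `rank [H11·M1 H12·M2] = rank [H11 H12·M2] = r`, `M1` has full
column rank `r - R2`, `M2` has full column rank `R2 ≥ 1`, and `M1' = [α M1]` satisfies
`rank (H11·M1') = r - R2 + 1`, then some `R2 - 1` columns of `M2` form a full column rank
matrix `M2'` with `span (H11·M1') ⊓ span (H12·M2') = {0}`. -/
theorem stmt_7 {F : Type*} [Field F] {m n1 n2 r R2 : ℕ}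
    (H11 : Matrix (Fin m) (Fin n1) F) (H12 : Matrix (Fin m) (Fin n2) F)
    (M1 : Matrix (Fin n1) (Fin (r - R2)) F) (M2 : Matrix (Fin n2) (Fin R2) F)
    (hR2pos : 1 ≤ R2) (hR2r : R2 ≤ r)
    (hM1 : M1.rank = r - R2) (hM2 : M2.rank = R2)
    (hr1 : (Matrix.fromCols (H11 * M1) (H12 * M2)).rank = r)
    (hr2 : (Matrix.fromCols H11 (H12 * M2)).rank = r)
    (α : Fin n1 → F)
    (hM1' : (H11 * Matrix.fromCols (Matrix.of fun i (_ : Fin 1) => α i) M1).rank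
        = r - R2 + 1) :
    ∃ f : Fin (R2 - 1) → Fin R2, Function.Injective f ∧
      (M2.submatrix id f).rank = R2 - 1 ∧
      LinearMap.range
          (H11 * Matrix.fromCols (Matrix.of fun i (_ : Fin 1) => α i) M1).mulVecLin ⊓
        LinearMap.range (H12 * M2.submatrix id f).mulVecLin = ⊥ :=
  stmt_7_general H11 H12 M1 M2 hR2r hM2 hr1 hr2 α hM1'
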